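/- Let (R, 𝔼) be a pre-λ probability space and X ∈ R. Then the σ-moment generating function of -X is obtained from that of X by applying ω̃: 𝔼[Exp_σ(-X h_1)] = ω̃(𝔼[Exp_σ(X h_1)]). -/
import Mathlib


/-- A (pre-)λ-ring: a commutative ring with λ-operations `lam n` and σ-operations `sig n`,
where `λ_t(x) = ∑ λⁿ(x) tⁿ` satisfies `λ⁰ = 1`, `λ¹ = id`, `λ_t(0) = 1`,
`λ_t(x+y) = λ_t(x)λ_t(y)`, and the σ-operations are determined by the generating function
relation `σ_t(x) = 1/λ_{-t}(x)`, i.e. `σ_t(x)·λ_{-t}(x) = 1` coefficientwise. -/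
structure PreLambdaRing (R : Type*) [CommRing R] where
  lam : ℕ → R → R
  sig : ℕ → R → R
  lam_zero : ∀ x, lam 0 x = 1
  lam_one : ∀ x, lam 1 x = x
  lam_zero_elem : ∀ n, 0 < n → lam n (0 : R) = 0
  lam_add : ∀ x y n, lam n (x + y) = ∑ p ∈ Finset.range (n + 1), lam p x * lam (n - p) y
  sig_zero : ∀ x, sig 0 x = 1
  sig_lam : ∀ x n, 0 < n →
    ∑ p ∈ Finset.range (n + 1), sig p x * ((-1 : R) ^ (n - p) * lam (n - p) x) = 0

/-- The convolution of `λ(x)` and `λ(-x)` vanishes in positive degrees, since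
`λ_t(x)·λ_t(-x) = λ_t(0) = 1`. -/
lemma lam_neg_conv {R : Type*} [CommRing R] (L : PreLambdaRing R) (x : R) (n : ℕ)
    (hn : 0 < n) :
    ∑ p ∈ Finset.range (n + 1), L.lam p x * L.lam (n - p) (-x) = 0 := by
  have h := (L.lam_add x (-x) n).symm
  rw [add_neg_cancel, L.lam_zero_elem n hn] at h
  exact h

/-- Key identity: `σⁿ(-x) = (-1)ⁿ λⁿ(x)`. -/
lemma sig_neg {R : Type*} [CommRing R] (L : PreLambdaRing R) (x : R) (n : ℕ) :
    L.sig n (-x) = (-1 : R) ^ n * L.lam n x := by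
  induction n using Nat.strong_induction_on with
  | _ n ih =>
    rcases Nat.eq_zero_or_pos n with rfl | hn
    · simp [L.sig_zero, L.lam_zero]
    have hσ := L.sig_lam (-x) n hn
    rw [Finset.sum_range_succ] at hσ
    simp only [Nat.sub_self, pow_zero, L.lam_zero, one_mul, mul_one] at hσ
    have hc := lam_neg_conv L x n hn
    rw [Finset.sum_range_succ, Nat.sub_self, L.lam_zero, mul_one] at hc
    have hS : ∑ p ∈ Finset.range n, L.sig p (-x) * ((-1 : R) ^ (n - p) * L.lam (n - p) (-x))
        = (-1 : R) ^ n * ∑ p ∈ Finset.range n, L.lam p x * L.lam (n - p) (-x) := by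
      rw [Finset.mul_sum]
      refine Finset.sum_congr rfl fun p hp => ?_
      rw [ih p (Finset.mem_range.mp hp)]
      have hpow : (-1 : R) ^ p * (-1 : R) ^ (n - p) = (-1 : R) ^ n := by
        rw [← pow_add, Nat.add_sub_cancel' (Finset.mem_range.mp hp).le]
      linear_combination (L.lam p x * L.lam (n - p) (-x)) * hpow
    linear_combination hσ - hS - (-1 : R) ^ n * hc

/-- Multiset-product version of `sig_neg`, with the sign expressed via a `ℤ`-scalar. -/
lemma sig_neg_prod {R : Type*} [CommRing R] (L : PreLambdaRing R) (X : R) (s : Multiset ℕ) :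
    (s.map (fun k => L.sig k (-X))).prod
      = ((-1 : ℤ) ^ s.sum) • (s.map (fun k => L.lam k X)).prod := by
  induction s using Multiset.induction with
  | empty => simp
  | cons a s ih =>
    simp only [Multiset.map_cons, Multiset.prod_cons, Multiset.sum_cons]
    rw [sig_neg, ih, zsmul_eq_mul, zsmul_eq_mul]
    push_cast
    ring

/-- Let `(R, 𝔼)` be a pre-λ probability space: `R` a pre-λ ring with an
additive (group homomorphism) expectation `𝔼 : R → C` to a commutative ring `C`.  For
`X ∈ R`, the σ-moment generating function `𝔼[Exp_σ(X h₁)] = ∑_τ 𝔼[h_τ ∘ X] m_τ ∈ Λ_C^∧`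
of `-X` is obtained from that of `X` by applying `ω̃`:
`𝔼[Exp_σ(-X h₁)] = ω̃(𝔼[Exp_σ(X h₁)])`.
Comparing coefficients of the monomial symmetric functions `m_τ` (using that `ω̃` is a Hall
isometry, so that `⟨ω̃ F, h_τ⟩ = (-1)^{|τ|} ⟨F, e_τ⟩`), this says exactly that for every
partition `τ`: `𝔼[h_τ ∘ (-X)] = (-1)^{|τ|} 𝔼[e_τ ∘ X]`, where `h_τ ∘ X = ∏ᵢ σ^{τᵢ}(X)`
and `e_τ ∘ X = ∏ᵢ λ^{τᵢ}(X)`, which is the statement formalized here. -/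
theorem sigma_mgf_neg (R C : Type*) [CommRing R] [CommRing C] (L : PreLambdaRing R)
    (E : R →+ C) (X : R) (τ : Multiset ℕ) (hτ : ∀ k ∈ τ, 0 < k) :
    E ((τ.map (fun k => L.sig k (-X))).prod) =
      (-1 : C) ^ τ.sum * E ((τ.map (fun k => L.lam k X)).prod) := by
  rw [sig_neg_prod, map_zsmul, zsmul_eq_mul]
  push_cast
  ring
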